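/- arXiv:1408.2327 — 9 statements merged into one kernel-verified Lean document; each statement's English description precedes it below -/
import Mathlib

section
/- For any label y ∈ {1,…,k} and any increasing vector α ∈ ℝ^{k−1}, the absolute error |y − pred(α)| equals Σ_{i=1}^{y−1} [α_i ≥ 0] + Σ_{i=y}^{k−1} [α_i < 0], where pred(α) = 1 + Σ_{i=1}^{k−1} [α_i < 0]. -/
open Finset

/-- Prediction rule: one plus the number of strictly negative coordinates. -/
noncomputable def pred (k : ℕ) (α : ℕ → ℝ) : ℕ :=
  1 + ((Finset.Icc 1 (k - 1)).filter (fun i => α i < 0)).card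

/-- for any label `y ∈ {1,…,k}` and any increasing vector `α`,
`|y − pred α| = Σ_{i=1}^{y−1} [α i ≥ 0] + Σ_{i=y}^{k−1} [α i < 0]`. -/
theorem stmt1 (k y : ℕ) (hk : 2 ≤ k) (hy : y ∈ Finset.Icc 1 k) (α : ℕ → ℝ)
    (hmono : ∀ i, 1 ≤ i → i + 1 ≤ k - 1 → α i ≤ α (i + 1)) :
    |(y : ℤ) - (pred k α : ℤ)| =
      ((((Finset.Icc 1 (y - 1)).filter (fun i => 0 ≤ α i)).card
        + ((Finset.Icc y (k - 1)).filter (fun i => α i < 0)).card : ℕ) : ℤ) := by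
  obtain ⟨hy1, hy2⟩ := Finset.mem_Icc.mp hy
  set S := (Finset.Icc 1 (k - 1)).filter (fun i => α i < 0) with hS
  set N := S.card with hN
  have hchain : ∀ i j, 1 ≤ i → i ≤ j → j ≤ k - 1 → α i ≤ α j := by
    intro i j hi hij hj
    induction j with
    | zero => exact absurd (hi.trans hij) (by norm_num)
    | succ n ih =>
      rcases Nat.eq_or_lt_of_le hij with h | h
      · rw [h]
      · have h1 : i ≤ n := by omega
        exact le_trans (ih h1 (by omega)) (hmono n (by omega) hj)
  have hdc : ∀ i j, 1 ≤ i → i ≤ j → j ≤ k - 1 → α j < 0 → α i < 0 := by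
    intro i j hi hij hj hneg
    exact lt_of_le_of_lt (hchain i j hi hij hj) hneg
  have hNle : N ≤ k - 1 := by
    have h1 : N ≤ (Finset.Icc 1 (k - 1)).card := Finset.card_filter_le _ _
    rw [Nat.card_Icc] at h1
    omega
  have hmem : ∀ j, j ∈ S ↔ 1 ≤ j ∧ j ≤ N := by
    intro j
    constructor
    · intro hj
      obtain ⟨hj1, hjneg⟩ := Finset.mem_filter.mp hj
      obtain ⟨hj1a, hj1b⟩ := Finset.mem_Icc.mp hj1
      refine ⟨hj1a, ?_⟩
      have hsub : Finset.Icc 1 j ⊆ S := by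
        intro x hx
        obtain ⟨hx1, hx2⟩ := Finset.mem_Icc.mp hx
        exact Finset.mem_filter.mpr ⟨Finset.mem_Icc.mpr ⟨hx1, by omega⟩,
          hdc x j hx1 hx2 hj1b hjneg⟩
      have := Finset.card_le_card hsub
      rw [Nat.card_Icc] at this
      omega
    · rintro ⟨hj1, hj2⟩
      by_contra hjS
      have hsub : S ⊆ Finset.Icc 1 (j - 1) := by
        intro x hx
        obtain ⟨hx1, hxneg⟩ := Finset.mem_filter.mp hx
        obtain ⟨hxa, hxb⟩ := Finset.mem_Icc.mp hx1
        refine Finset.mem_Icc.mpr ⟨hxa, ?_⟩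
        by_contra hlt
        push_neg at hlt
        have : α j < 0 := hdc j x hj1 (by omega) hxb hxneg
        exact hjS (Finset.mem_filter.mpr ⟨Finset.mem_Icc.mpr ⟨hj1, by omega⟩, this⟩)
      have := Finset.card_le_card hsub
      rw [Nat.card_Icc] at this
      omega
  have hA : (Finset.Icc 1 (y - 1)).filter (fun i => 0 ≤ α i) = Finset.Icc (N + 1) (y - 1) := by
    ext j
    simp only [Finset.mem_filter, Finset.mem_Icc]
    constructor
    · rintro ⟨⟨h1, h2⟩, h3⟩
      refine ⟨?_, h2⟩
      by_contra h
      push_neg at h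
      have hj : j ∈ S := (hmem j).mpr ⟨h1, by omega⟩
      have := (Finset.mem_filter.mp hj).2
      linarith
    · rintro ⟨h1, h2⟩
      have h1' : 1 ≤ j := by omega
      refine ⟨⟨h1', h2⟩, ?_⟩
      by_contra h
      push_neg at h
      have hj : j ∈ S := Finset.mem_filter.mpr ⟨Finset.mem_Icc.mpr ⟨h1', by omega⟩, h⟩
      have := ((hmem j).mp hj).2
      omega
  have hB : (Finset.Icc y (k - 1)).filter (fun i => α i < 0) = Finset.Icc y N := by
    ext j
    simp only [Finset.mem_filter, Finset.mem_Icc]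
    constructor
    · rintro ⟨⟨h1, h2⟩, h3⟩
      refine ⟨h1, ?_⟩
      have hj : j ∈ S := Finset.mem_filter.mpr ⟨Finset.mem_Icc.mpr ⟨by omega, h2⟩, h3⟩
      exact ((hmem j).mp hj).2
    · rintro ⟨h1, h2⟩
      have hj : j ∈ S := (hmem j).mpr ⟨by omega, h2⟩
      obtain ⟨hj1, hjneg⟩ := Finset.mem_filter.mp hj
      exact ⟨⟨h1, by omega⟩, hjneg⟩
  rw [hA, hB, Nat.card_Icc, Nat.card_Icc]
  have hpred : pred k α = 1 + N := rfl
  rw [hpred]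
  rcases abs_cases ((y : ℤ) - ((1 + N : ℕ) : ℤ)) with ⟨he, _⟩ | ⟨he, _⟩ <;> rw [he] <;>
    push_cast <;> omega
end

section
/- For any p ∈ Δ^k, the vector α̲(p) = (2u_1(p) − 1, …, 2u_{k−1}(p) − 1) lies in S and minimizes the conditional absolute-error risk L(α, p) = Σ_{i=1}^k p_i |i − pred(α)| over all α ∈ S. -/
open Finset

/-- Cumulative probabilities `u_i(p) = Σ_{j=1}^i p_j`. -/
noncomputable def cum (p : ℕ → ℝ) (i : ℕ) : ℝ := ∑ j ∈ Finset.Icc 1 i, p j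

/-- Membership in `S`: increasing coordinates. -/
def IncrVec (k : ℕ) (α : ℕ → ℝ) : Prop :=
  ∀ i, 1 ≤ i → i + 1 ≤ k - 1 → α i ≤ α (i + 1)

/-- Conditional absolute-error risk `L(α, p) = Σ_{i=1}^k p_i |i − pred α|`. -/
noncomputable def condRisk (k : ℕ) (α : ℕ → ℝ) (p : ℕ → ℝ) : ℝ :=
  ∑ i ∈ Finset.Icc 1 k, p i * |(i : ℝ) - (pred k α : ℝ)|

lemma cum_mono (p : ℕ → ℝ) (hp0 : ∀ i, 0 ≤ p i) {i j : ℕ} (h : i ≤ j) :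
    cum p i ≤ cum p j := by
  unfold cum
  exact Finset.sum_le_sum_of_subset_of_nonneg
    (Finset.Icc_subset_Icc_right h) (fun x _ _ => hp0 x)

lemma risk_step (k : ℕ) (p : ℕ → ℝ) (hp1 : ∑ i ∈ Finset.Icc 1 k, p i = 1)
    {m : ℕ} (hm : m ≤ k) :
    (∑ i ∈ Finset.Icc 1 k, p i * |(i:ℝ) - ((m+1 : ℕ) : ℝ)|) =
    (∑ i ∈ Finset.Icc 1 k, p i * |(i:ℝ) - ((m : ℕ) : ℝ)|) + (2 * cum p m - 1) := by
  have key : ∀ i ∈ Finset.Icc 1 k,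
      p i * |(i:ℝ) - ((m+1 : ℕ) : ℝ)| =
      p i * |(i:ℝ) - ((m : ℕ) : ℝ)| + (if i ≤ m then p i else -p i) := by
    intro i _
    rcases le_or_gt i m with h | h
    · have him : (i:ℝ) ≤ m := by exact_mod_cast h
      have e1 : |(i:ℝ) - ((m+1 : ℕ) : ℝ)| = (m:ℝ) + 1 - i := by
        rw [abs_of_nonpos (by push_cast; linarith)]; push_cast; ring
      have e2 : |(i:ℝ) - ((m : ℕ) : ℝ)| = (m:ℝ) - i := by
        rw [abs_of_nonpos (by linarith)]; ring
      rw [e1, e2, if_pos h]; ring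
    · have him : (m:ℝ) + 1 ≤ i := by exact_mod_cast h
      have e1 : |(i:ℝ) - ((m+1 : ℕ) : ℝ)| = (i:ℝ) - m - 1 := by
        rw [abs_of_nonneg (by push_cast; linarith)]; push_cast; ring
      have e2 : |(i:ℝ) - ((m : ℕ) : ℝ)| = (i:ℝ) - m := by
        rw [abs_of_nonneg (by linarith)]
      rw [e1, e2, if_neg (by omega)]; ring
  rw [Finset.sum_congr rfl key, Finset.sum_add_distrib]
  congr 1
  have hsplit : ∀ i : ℕ, (if i ≤ m then p i else -p i)
      = 2 * (if i ≤ m then p i else 0) - p i := by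
    intro i; split <;> ring
  rw [Finset.sum_congr rfl (fun i _ => hsplit i), Finset.sum_sub_distrib, hp1,
    ← Finset.mul_sum, ← Finset.sum_filter]
  have hfil : (Finset.Icc 1 k).filter (fun i => i ≤ m) = Finset.Icc 1 m := by
    ext i; simp only [Finset.mem_filter, Finset.mem_Icc]; omega
  rw [hfil]; rfl

lemma risk_up (k : ℕ) (p : ℕ → ℝ) (hp0 : ∀ i, 0 ≤ p i)
    (hp1 : ∑ i ∈ Finset.Icc 1 k, p i = 1)
    {a b : ℕ} (ha : 1 ≤ 2 * cum p a) (hab : a ≤ b) (hb : b ≤ k) :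
    (∑ i ∈ Finset.Icc 1 k, p i * |(i:ℝ) - ((a : ℕ) : ℝ)|) ≤
    (∑ i ∈ Finset.Icc 1 k, p i * |(i:ℝ) - ((b : ℕ) : ℝ)|) := by
  induction b, hab using Nat.le_induction with
  | base => exact le_rfl
  | succ b hab ih =>
    have hbk : b ≤ k := by omega
    rw [risk_step k p hp1 hbk]
    have hcum : 1 ≤ 2 * cum p b := le_trans ha (by
      have := cum_mono p hp0 hab; linarith)
    have := ih hbk
    linarith

lemma risk_down (k : ℕ) (p : ℕ → ℝ) (hp1 : ∑ i ∈ Finset.Icc 1 k, p i = 1)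
    {a b : ℕ} (hab : a ≤ b) (hb : b ≤ k)
    (hmid : ∀ j, a ≤ j → j < b → 2 * cum p j ≤ 1) :
    (∑ i ∈ Finset.Icc 1 k, p i * |(i:ℝ) - ((b : ℕ) : ℝ)|) ≤
    (∑ i ∈ Finset.Icc 1 k, p i * |(i:ℝ) - ((a : ℕ) : ℝ)|) := by
  induction b, hab using Nat.le_induction with
  | base => exact le_rfl
  | succ b hab ih =>
    have hbk : b ≤ k := by omega
    rw [risk_step k p hp1 hbk]
    have h1 : 2 * cum p b ≤ 1 := hmid b hab (by omega)
    have h2 := ih hbk (fun j hj hj' => hmid j hj (by omega))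
    linarith

/-- the vector `α̲(p)` with coordinates `2 u_i(p) − 1` lies in `S`
and minimizes the conditional absolute-error risk over `S`. -/
theorem stmt3 (k : ℕ) (hk : 2 ≤ k)
    (p : ℕ → ℝ) (hp0 : ∀ i, 0 ≤ p i) (hp1 : ∑ i ∈ Finset.Icc 1 k, p i = 1) :
    IncrVec k (fun i => 2 * cum p i - 1) ∧
    ∀ α : ℕ → ℝ, IncrVec k α →
      condRisk k (fun i => 2 * cum p i - 1) p ≤ condRisk k α p := by
  constructor
  · intro i hi1 hi2
    have := cum_mono p hp0 (Nat.le_succ i)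
    simp only
    linarith
  · intro α _
    set T := (Finset.Icc 1 (k - 1)).filter (fun i => (2 * cum p i - 1) < 0) with hT
    set c := T.card with hc
    have hck : c ≤ k - 1 := by
      calc c ≤ (Finset.Icc 1 (k - 1)).card := Finset.card_filter_le _ _
        _ = k - 1 := by rw [Nat.card_Icc]; omega
    have hcum0 : cum p 0 = 0 := by simp [cum]
    -- Fact 2 : for j ≤ c, 2 * cum p j ≤ 1
    have fact2 : ∀ j, j ≤ c → 2 * cum p j ≤ 1 := by
      intro j hj
      rcases Nat.eq_zero_or_pos j with rfl | hj1
      · rw [hcum0]; norm_num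
      have hc1 : 1 ≤ c := le_trans hj1 hj
      have hcc : 2 * cum p c ≤ 1 := by
        by_contra hcon
        push_neg at hcon
        have hsub : T ⊆ Finset.Icc 1 (c - 1) := by
          intro i hiT
          have hi := Finset.mem_filter.mp hiT
          have hlt : 2 * cum p i - 1 < 0 := hi.2
          have hi1 : 1 ≤ i := (Finset.mem_Icc.mp hi.1).1
          have : i < c := by
            by_contra hic
            push_neg at hic
            have := cum_mono p hp0 hic
            linarith
          exact Finset.mem_Icc.mpr ⟨hi1, by omega⟩
        have := Finset.card_le_card hsub
        rw [Nat.card_Icc] at this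
        omega
      have := cum_mono p hp0 hj
      linarith
    -- Fact 1 : if c+1 ≤ k-1, then 1 ≤ 2 * cum p (c+1)
    have fact1 : c + 1 ≤ k - 1 → 1 ≤ 2 * cum p (c + 1) := by
      intro hck1
      by_contra hcon
      push_neg at hcon
      have hsub : Finset.Icc 1 (c + 1) ⊆ T := by
        intro i hi
        have hi' := Finset.mem_Icc.mp hi
        refine Finset.mem_filter.mpr ⟨Finset.mem_Icc.mpr ⟨hi'.1, by omega⟩, ?_⟩
        have := cum_mono p hp0 hi'.2
        show 2 * cum p i - 1 < 0
        linarith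
      have := Finset.card_le_card hsub
      rw [Nat.card_Icc] at this
      omega
    -- the minimizing pred value
    have hpred1 : pred k (fun i => 2 * cum p i - 1) = c + 1 := by
      show 1 + T.card = c + 1
      omega
    unfold condRisk
    rw [hpred1]
    set m := pred k α with hm
    have hm1 : 1 ≤ m := by unfold pred at hm; omega
    have hmk : m ≤ k := by
      have : ((Finset.Icc 1 (k - 1)).filter (fun i => α i < 0)).card ≤ k - 1 := by
        calc _ ≤ (Finset.Icc 1 (k - 1)).card := Finset.card_filter_le _ _
          _ = k - 1 := by rw [Nat.card_Icc]; omega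
      unfold pred at hm; omega
    have hck' : c + 1 ≤ k := by omega
    rcases le_or_gt (c + 1) m with hle | hlt
    · rcases eq_or_lt_of_le hle with heq | hlt'
      · rw [heq]
      · have h1 : c + 1 ≤ k - 1 := by omega
        exact risk_up k p hp0 hp1 (fact1 h1) hle hmk
    · exact risk_down k p hp1 (le_of_lt hlt) hck'
        (fun j hj hj' => fact2 j (by omega))
end

section
/- Suppose φ : ℝ → ℝ satisfies that β ↦ φ(β) − φ(−β) is decreasing. Then for every p ∈ Δ^k, the infimum over α ∈ S of the All-Threshold conditional surrogate risk A(α, p) = Σ_{i=1}^{k−1} [(1 − u_i(p)) φ(−α_i) + u_i(p) φ(α_i)] equals Σ_{i=1}^{k−1} C*(u_i(p)), where C*(q) = inf_{β∈ℝ} [q φ(β) + (1 − q) φ(−β)]; that is, the monotonicity constraints α ∈ S can be ignored. -/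
open Finset

/-- All-Threshold conditional surrogate risk
`A(α, p) = Σ_{i=1}^{k−1} [(1 − u_i(p)) φ(−α_i) + u_i(p) φ(α_i)]`. -/
noncomputable def atRisk (k : ℕ) (φ : ℝ → ℝ) (α : ℕ → ℝ) (p : ℕ → ℝ) : ℝ :=
  ∑ i ∈ Finset.Icc 1 (k - 1), ((1 - cum p i) * φ (-α i) + cum p i * φ (α i))

/-- if `β ↦ φ(β) − φ(−β)` is decreasing and the unconstrained
infimum of `A(·, p)` over `ℝ^{k−1}` is attained, then the infimum of the
All-Threshold conditional surrogate risk over the ordered set `S` equals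
`Σ_{i=1}^{k−1} C*(u_i(p))`, where `C*(q) = inf_β [q φ(β) + (1 − q) φ(−β)]`:
the monotonicity constraints can be ignored. -/
theorem stmt5 (k : ℕ) (hk : 2 ≤ k) (φ : ℝ → ℝ)
    (hdec : ∀ a b : ℝ, a ≤ b → φ b - φ (-b) ≤ φ a - φ (-a))
    (p : ℕ → ℝ) (hp0 : ∀ i, 0 ≤ p i) (hp1 : ∑ i ∈ Finset.Icc 1 k, p i = 1)
    (αstar : ℕ → ℝ) (hstar : ∀ β : ℕ → ℝ, atRisk k φ αstar p ≤ atRisk k φ β p) :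
    IsGLB {y : ℝ | ∃ α : ℕ → ℝ, IncrVec k α ∧ y = atRisk k φ α p}
      (∑ i ∈ Finset.Icc 1 (k - 1),
        sInf {y : ℝ | ∃ β : ℝ, y = cum p i * φ β + (1 - cum p i) * φ (-β)}) := by

  classical
  set C : ℕ → ℝ → ℝ := fun i β => (1 - cum p i) * φ (-β) + cum p i * φ β with hC
  have hcum : ∀ i j : ℕ, i ≤ j → cum p i ≤ cum p j := by
    intro i j hij
    apply Finset.sum_le_sum_of_subset_of_nonneg (Finset.Icc_subset_Icc le_rfl hij)
    intro x _ _; exact hp0 x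
  -- coordinatewise optimality of αstar
  have hcoord : ∀ i ∈ Finset.Icc 1 (k-1), ∀ β, C i (αstar i) ≤ C i β := by
    intro i hi β
    have h := hstar (Function.update αstar i β)
    rw [atRisk, atRisk, ← Finset.add_sum_erase _ _ hi, ← Finset.add_sum_erase _ _ hi] at h
    have hrest : ∑ j ∈ (Finset.Icc 1 (k-1)).erase i,
        ((1 - cum p j) * φ (-(Function.update αstar i β j)) +
          cum p j * φ (Function.update αstar i β j))
        = ∑ j ∈ (Finset.Icc 1 (k-1)).erase i,
        ((1 - cum p j) * φ (-αstar j) + cum p j * φ (αstar j)) := by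
      apply Finset.sum_congr rfl
      intro j hj
      rw [Function.update_of_ne (Finset.ne_of_mem_erase hj)]
    rw [hrest, Function.update_self] at h
    simpa [hC] using le_of_add_le_add_right h
  -- exchange argument
  have hmin : ∀ i ∈ Finset.Icc 1 (k-1), ∀ j ∈ Finset.Icc 1 (k-1), i ≤ j →
      αstar j ≤ αstar i → ∀ β, C i (αstar j) ≤ C i β := by
    intro i hi j hj hij hba β
    have h1 := hcoord i hi β
    have h2 := hcoord j hj (αstar i)
    have h3 : cum p i ≤ cum p j := hcum _ _ hij
    have h4 := hdec _ _ hba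
    simp only [hC] at h1 h2 ⊢
    nlinarith [mul_nonneg (sub_nonneg.2 h3) (sub_nonneg.2 h4)]
  -- monotone rearrangement
  set α' : ℕ → ℝ := fun i =>
    if h : (Finset.Icc i (k-1)).Nonempty then (Finset.Icc i (k-1)).inf' h αstar
    else αstar i with hα'
  have hmono : IncrVec k α' := by
    intro i h1 h2
    have hne2 : (Finset.Icc (i+1) (k-1)).Nonempty := Finset.nonempty_Icc.2 h2
    have hne1 : (Finset.Icc i (k-1)).Nonempty :=
      Finset.nonempty_Icc.2 (le_trans (Nat.le_succ i) h2)
    obtain ⟨j, hj, hje⟩ := Finset.exists_mem_eq_inf' hne2 αstar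
    simp only [hα', dif_pos hne1, dif_pos hne2, hje]
    apply Finset.inf'_le
    exact Finset.mem_Icc.2 ⟨le_trans (Nat.le_succ i) (Finset.mem_Icc.1 hj).1,
      (Finset.mem_Icc.1 hj).2⟩
  have hα'min : ∀ i ∈ Finset.Icc 1 (k-1), ∀ β, C i (α' i) ≤ C i β := by
    intro i hi β
    have hne : (Finset.Icc i (k-1)).Nonempty :=
      Finset.nonempty_Icc.2 (Finset.mem_Icc.1 hi).2
    obtain ⟨j, hj, hje⟩ := Finset.exists_mem_eq_inf' hne αstar
    have hji := Finset.mem_Icc.1 hj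
    have hj' : j ∈ Finset.Icc 1 (k-1) :=
      Finset.mem_Icc.2 ⟨le_trans (Finset.mem_Icc.1 hi).1 hji.1, hji.2⟩
    have hle : αstar j ≤ αstar i := by
      rw [← hje]
      exact Finset.inf'_le αstar (Finset.mem_Icc.2 ⟨le_rfl, (Finset.mem_Icc.1 hi).2⟩)
    have he : α' i = αstar j := by simp only [hα', dif_pos hne, hje]
    rw [he]
    exact hmin i hi j hj' hji.1 hle β
  -- the sInf values
  have hsinf : ∀ i ∈ Finset.Icc 1 (k-1),
      sInf {y : ℝ | ∃ β : ℝ, y = cum p i * φ β + (1 - cum p i) * φ (-β)}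
        = C i (αstar i) := by
    intro i hi
    have hls : IsLeast {y : ℝ | ∃ β : ℝ, y = cum p i * φ β + (1 - cum p i) * φ (-β)}
        (C i (αstar i)) := by
      constructor
      · exact ⟨αstar i, by simp only [hC]; ring⟩
      · rintro y ⟨β, rfl⟩
        have h := hcoord i hi β
        simp only [hC] at h ⊢
        linarith
    exact hls.csInf_eq
  apply IsLeast.isGLB
  constructor
  · refine ⟨α', hmono, ?_⟩
    rw [atRisk]
    apply Finset.sum_congr rfl
    intro i hi
    rw [hsinf i hi]
    have := le_antisymm (hcoord i hi (α' i)) (hα'min i hi (αstar i))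
    simpa [hC] using this
  · rintro y ⟨α, hαS, rfl⟩
    rw [atRisk]
    apply Finset.sum_le_sum
    intro i hi
    rw [hsinf i hi]
    exact hcoord i hi (α i)
end

section
/- Let φ be convex, differentiable at 0 with φ'(0) < 0. For any q ∈ [0,1] and β ∈ ℝ with β(2q − 1) ≤ 0, it holds that φ(0) ≤ q φ(β) + (1 − q) φ(−β). -/
lemma tangent_le (φ : ℝ → ℝ) (hconv : ConvexOn ℝ Set.univ φ)
    (hdiff : DifferentiableAt ℝ φ 0) (x : ℝ) :
    φ 0 + deriv φ 0 * x ≤ φ x := by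
  rcases lt_trichotomy x 0 with hx | hx | hx
  · have h := hconv.slope_le_of_hasDerivAt (Set.mem_univ x) (Set.mem_univ 0) hx hdiff.hasDerivAt
    rw [slope_def_field] at h
    have : (φ 0 - φ x) / (0 - x) ≤ deriv φ 0 := h
    have hx' : 0 < -x := by linarith
    rw [div_le_iff₀ (by linarith)] at this
    nlinarith
  · simp [hx]
  · have h := hconv.deriv_le_slope (Set.mem_univ 0) (Set.mem_univ x) hx hdiff
    rw [slope_def_field] at h
    have : deriv φ 0 ≤ (φ x - φ 0) / (x - 0) := h
    rw [le_div_iff₀ (by linarith)] at this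
    nlinarith

/-- if `φ` is convex, differentiable at `0` with `φ'(0) < 0`, then
for `q ∈ [0,1]` and `β` with `β(2q − 1) ≤ 0`, `φ(0) ≤ q φ(β) + (1 − q) φ(−β)`. -/
theorem stmt9 (φ : ℝ → ℝ) (hconv : ConvexOn ℝ Set.univ φ)
    (hdiff : DifferentiableAt ℝ φ 0) (hderiv : deriv φ 0 < 0)
    (q : ℝ) (hq : q ∈ Set.Icc (0 : ℝ) 1) (β : ℝ) (hβ : β * (2 * q - 1) ≤ 0) :
    φ 0 ≤ q * φ β + (1 - q) * φ (-β) := by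
  obtain ⟨hq0, hq1⟩ := hq
  have h1 := tangent_le φ hconv hdiff β
  have h2 := tangent_le φ hconv hdiff (-β)
  nlinarith [mul_nonneg (neg_nonneg.mpr hderiv.le) (neg_nonneg.mpr hβ)]
end

section
/- The hinge All-Threshold surrogate satisfies the excess risk bound L(α, p) − L*(p) ≤ A(α, p) − A*(p) for all α ∈ S, p ∈ Δ^k, where A is the AT conditional risk with φ the hinge loss φ(t) = max(1 − t, 0). -/
open Finset

/-- The hinge loss. -/
noncomputable def hinge (t : ℝ) : ℝ := max (1 - t) 0

/-- All-Threshold conditional surrogate risk with the hinge loss. -/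
noncomputable def atHingeRisk (k : ℕ) (α : ℕ → ℝ) (p : ℕ → ℝ) : ℝ :=
  ∑ i ∈ Finset.Icc 1 (k - 1), ((1 - cum p i) * hinge (-α i) + cum p i * hinge (α i))

/- ## Auxiliary lemmas -/

lemma hinge_neg' (t : ℝ) : hinge (-t) = max (1 + t) 0 := by
  unfold hinge; ring_nf

lemma core_neg (u t : ℝ) (hu0 : 0 ≤ u) (hu1 : u ≤ 1) (ht : t < 0) :
    u + min u (1 - u) ≤ (1 - u) * hinge (-t) + u * hinge t := by
  rw [hinge_neg']
  have h2 : hinge t = 1 - t := by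
    unfold hinge; exact max_eq_left (by linarith)
  rw [h2]
  rcases le_total (1 + t) 0 with h1 | h1
  · rw [max_eq_right h1]
    rcases le_total u (1 - u) with h3 | h3
    · rw [min_eq_left h3]; nlinarith
    · rw [min_eq_right h3]; nlinarith
  · rw [max_eq_left h1]
    rcases le_total u (1 - u) with h3 | h3
    · rw [min_eq_left h3]; nlinarith
    · rw [min_eq_right h3]; nlinarith

lemma core_nonneg (u t : ℝ) (hu0 : 0 ≤ u) (hu1 : u ≤ 1) (ht : 0 ≤ t) :
    (1 - u) + min u (1 - u) ≤ (1 - u) * hinge (-t) + u * hinge t := by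
  have h2 : hinge (-t) = 1 + t := by
    rw [hinge_neg']; exact max_eq_left (by linarith)
  rw [h2]
  unfold hinge
  rcases le_total (1 - t) 0 with h1 | h1
  · rw [max_eq_right h1]
    rcases le_total u (1 - u) with h3 | h3
    · rw [min_eq_left h3]; nlinarith
    · rw [min_eq_right h3]; nlinarith
  · rw [max_eq_left h1]
    rcases le_total u (1 - u) with h3 | h3
    · rw [min_eq_left h3]; nlinarith
    · rw [min_eq_right h3]; nlinarith

lemma cum_nonneg (p : ℕ → ℝ) (hp0 : ∀ i, 0 ≤ p i) (i : ℕ) : 0 ≤ cum p i :=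
  Finset.sum_nonneg fun x _ => hp0 x

lemma cum_le_one (k : ℕ) (p : ℕ → ℝ) (hp0 : ∀ i, 0 ≤ p i)
    (hp1 : ∑ i ∈ Finset.Icc 1 k, p i = 1) {i : ℕ} (h : i ≤ k) : cum p i ≤ 1 := by
  calc cum p i ≤ cum p k := cum_mono p hp0 h
  _ = 1 := hp1

lemma risk_eq (k : ℕ) (hk : 2 ≤ k) (r : ℕ) (hr1 : 1 ≤ r) (hrk : r ≤ k)
    (p : ℕ → ℝ) (hp1 : ∑ i ∈ Finset.Icc 1 k, p i = 1) :
    ∑ i ∈ Finset.Icc 1 k, p i * |(i : ℝ) - (r : ℝ)| =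
      ∑ j ∈ Finset.Icc 1 (k - 1), (if j < r then cum p j else 1 - cum p j) := by
  have habs : ∀ i ∈ Finset.Icc 1 k, p i * |(i : ℝ) - (r : ℝ)| =
      ∑ j ∈ Finset.Icc 1 (k - 1), (if min i r ≤ j ∧ j < max i r then p i else 0) := by
    intro i hi
    rw [Finset.mem_Icc] at hi
    have hsum : ∑ j ∈ Finset.Icc 1 (k - 1), (if min i r ≤ j ∧ j < max i r then p i else 0)
        = p i * ∑ j ∈ Finset.Icc 1 (k - 1), (if min i r ≤ j ∧ j < max i r then (1:ℝ) else 0) := by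
      rw [Finset.mul_sum]
      exact Finset.sum_congr rfl fun j _ => by split_ifs <;> ring
    rw [hsum, Finset.sum_boole]
    have hfil : (Finset.Icc 1 (k-1)).filter (fun j => min i r ≤ j ∧ j < max i r)
        = Finset.Ico (min i r) (max i r) := by
      ext a
      simp only [Finset.mem_filter, Finset.mem_Icc, Finset.mem_Ico]
      omega
    rw [hfil, Nat.card_Ico]
    congr 1
    rcases le_total i r with h | h
    · rw [max_eq_right h, min_eq_left h, abs_sub_comm,
        abs_of_nonneg (sub_nonneg.2 (Nat.cast_le.2 h)), Nat.cast_sub h]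
    · rw [max_eq_left h, min_eq_right h,
        abs_of_nonneg (sub_nonneg.2 (Nat.cast_le.2 h)), Nat.cast_sub h]
  rw [Finset.sum_congr rfl habs, Finset.sum_comm]
  refine Finset.sum_congr rfl fun j hj => ?_
  rw [Finset.mem_Icc] at hj
  by_cases hjr : j < r
  · rw [if_pos hjr]
    have : ∀ i ∈ Finset.Icc 1 k, (if min i r ≤ j ∧ j < max i r then p i else 0)
        = if i ≤ j then p i else 0 := by
      intro i hi
      rw [Finset.mem_Icc] at hi
      have : (min i r ≤ j ∧ j < max i r) ↔ i ≤ j := by omega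
      rw [if_congr this rfl rfl]
    rw [Finset.sum_congr rfl this, ← Finset.sum_filter]
    have : (Finset.Icc 1 k).filter (fun i => i ≤ j) = Finset.Icc 1 j := by
      ext a; simp only [Finset.mem_filter, Finset.mem_Icc]; omega
    rw [this]; rfl
  · rw [if_neg hjr]
    have : ∀ i ∈ Finset.Icc 1 k, (if min i r ≤ j ∧ j < max i r then p i else 0)
        = p i - (if i ≤ j then p i else 0) := by
      intro i hi
      rw [Finset.mem_Icc] at hi
      have hiff : (min i r ≤ j ∧ j < max i r) ↔ ¬ (i ≤ j) := by omega
      rw [if_congr hiff rfl rfl]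
      by_cases h : i ≤ j
      · rw [if_neg (not_not_intro h), if_pos h]; ring
      · rw [if_pos h, if_neg h]; ring
    rw [Finset.sum_congr rfl this, Finset.sum_sub_distrib, hp1, ← Finset.sum_filter]
    have : (Finset.Icc 1 k).filter (fun i => i ≤ j) = Finset.Icc 1 j := by
      ext a; simp only [Finset.mem_filter, Finset.mem_Icc]; omega
    rw [this]; rfl

lemma incr_mono {k : ℕ} {α : ℕ → ℝ} (hα : IncrVec k α) :
    ∀ i j, 1 ≤ i → i ≤ j → j ≤ k - 1 → α i ≤ α j := by
  intro i j hi hij hj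
  induction j with
  | zero => omega
  | succ n ih =>
    rcases Nat.lt_or_ge i (n+1) with h | h
    · exact le_trans (ih (by omega) (by omega)) (hα n (by omega) (by omega))
    · have : i = n + 1 := by omega
      rw [this]

lemma pred_le (k : ℕ) (hk : 1 ≤ k) (α : ℕ → ℝ) : pred k α ≤ k := by
  unfold pred
  have := Finset.card_filter_le (Finset.Icc 1 (k-1)) (fun i => α i < 0)
  rw [Nat.card_Icc] at this
  omega

lemma lt_pred_iff (k : ℕ) (α : ℕ → ℝ) (hα : IncrVec k α) {j : ℕ}
    (hj1 : 1 ≤ j) (hj2 : j ≤ k - 1) : j < pred k α ↔ α j < 0 := by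
  unfold pred
  constructor
  · intro h
    by_contra hne
    push_neg at hne
    have hsub : (Finset.Icc 1 (k-1)).filter (fun i => α i < 0) ⊆ Finset.Icc 1 (j-1) := by
      intro a ha
      rw [Finset.mem_filter, Finset.mem_Icc] at ha
      rw [Finset.mem_Icc]
      by_contra hc
      push_neg at hc
      have haj : j ≤ a := by omega
      have := incr_mono hα j a hj1 haj ha.1.2
      linarith [ha.2]
    have := Finset.card_le_card hsub
    rw [Nat.card_Icc] at this
    omega
  · intro h
    have hsub : Finset.Icc 1 j ⊆ (Finset.Icc 1 (k-1)).filter (fun i => α i < 0) := by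
      intro a ha
      rw [Finset.mem_Icc] at ha
      rw [Finset.mem_filter, Finset.mem_Icc]
      refine ⟨⟨ha.1, by omega⟩, ?_⟩
      calc α a ≤ α j := incr_mono hα a j ha.1 ha.2 hj2
      _ < 0 := h
    have := Finset.card_le_card hsub
    rw [Nat.card_Icc] at this
    omega

/-- the hinge All-Threshold surrogate satisfies the excess risk
bound `L(α,p) − L*(p) ≤ A(α,p) − A*(p)` for all `α ∈ S`, `p ∈ Δ^k`. -/
theorem stmt11 (k : ℕ) (hk : 2 ≤ k)
    (α : ℕ → ℝ) (hα : IncrVec k α)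
    (p : ℕ → ℝ) (hp0 : ∀ i, 0 ≤ p i) (hp1 : ∑ i ∈ Finset.Icc 1 k, p i = 1) :
    condRisk k α p - sInf {y : ℝ | ∃ β : ℕ → ℝ, IncrVec k β ∧ y = condRisk k β p} ≤
      atHingeRisk k α p -
        sInf {y : ℝ | ∃ β : ℕ → ℝ, IncrVec k β ∧ y = atHingeRisk k β p} := by
  set M := ∑ j ∈ Finset.Icc 1 (k-1), min (cum p j) (1 - cum p j) with hM
  have hL : ∀ β : ℕ → ℝ, condRisk k β p =
      ∑ j ∈ Finset.Icc 1 (k-1), (if j < pred k β then cum p j else 1 - cum p j) := by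
    intro β
    unfold condRisk
    exact risk_eq k hk (pred k β) (Nat.le_add_right 1 _) (pred_le k (by omega) β) p hp1
  -- lower bound for the condRisk infimum
  have hlbL : ∀ β : ℕ → ℝ, M ≤ condRisk k β p := by
    intro β
    rw [hL β, hM]
    apply Finset.sum_le_sum
    intro j _
    split_ifs
    · exact min_le_left _ _
    · exact min_le_right _ _
  have hInfL : M ≤ sInf {y : ℝ | ∃ β : ℕ → ℝ, IncrVec k β ∧ y = condRisk k β p} := by
    apply le_csInf
    · exact ⟨condRisk k α p, α, hα, rfl⟩
    · rintro y ⟨β, _, rfl⟩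
      exact hlbL β
  -- upper bound for the surrogate infimum
  have hInfA : sInf {y : ℝ | ∃ β : ℕ → ℝ, IncrVec k β ∧ y = atHingeRisk k β p} ≤ 2 * M := by
    set β := fun j => if cum p j < 1/2 then (-1:ℝ) else 1 with hβ
    have hincr : IncrVec k β := by
      intro i _ _
      by_cases h2 : cum p (i+1) < 1/2
      · have h1 : cum p i < 1/2 := lt_of_le_of_lt (cum_mono p hp0 (Nat.le_succ i)) h2
        simp only [hβ, if_pos h1, if_pos h2, le_refl]
      · simp only [hβ, if_neg h2]
        split_ifs <;> norm_num
    have hval : atHingeRisk k β p = 2 * M := by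
      unfold atHingeRisk
      rw [hM, Finset.mul_sum]
      refine Finset.sum_congr rfl fun j hj => ?_
      rw [Finset.mem_Icc] at hj
      have h0 := cum_nonneg p hp0 j
      have h1 : cum p j ≤ 1 := cum_le_one k p hp0 hp1 (by omega)
      by_cases h : cum p j < 1/2
      · rw [hβ]
        simp only [if_pos h]
        rw [min_eq_left (by linarith)]
        unfold hinge
        norm_num
        ring
      · rw [hβ]
        simp only [if_neg h]
        push_neg at h
        rw [min_eq_right (by linarith)]
        unfold hinge
        norm_num
        ring
    have hbdd : BddBelow {y : ℝ | ∃ β : ℕ → ℝ, IncrVec k β ∧ y = atHingeRisk k β p} := by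
      refine ⟨0, ?_⟩
      rintro y ⟨γ, _, rfl⟩
      apply Finset.sum_nonneg
      intro j hj
      rw [Finset.mem_Icc] at hj
      have h0 := cum_nonneg p hp0 j
      have h1 : cum p j ≤ 1 := cum_le_one k p hp0 hp1 (by omega)
      have hh1 : (0:ℝ) ≤ hinge (-γ j) := le_max_right _ _
      have hh2 : (0:ℝ) ≤ hinge (γ j) := le_max_right _ _
      nlinarith
    calc sInf {y : ℝ | ∃ β : ℕ → ℝ, IncrVec k β ∧ y = atHingeRisk k β p}
        ≤ atHingeRisk k β p := csInf_le hbdd ⟨β, hincr, rfl⟩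
      _ = 2 * M := hval
  -- main pointwise comparison
  have hmain : condRisk k α p + M ≤ atHingeRisk k α p := by
    rw [hL α, hM, ← Finset.sum_add_distrib]
    unfold atHingeRisk
    apply Finset.sum_le_sum
    intro j hj
    rw [Finset.mem_Icc] at hj
    have h0 := cum_nonneg p hp0 j
    have h1 : cum p j ≤ 1 := cum_le_one k p hp0 hp1 (by omega)
    by_cases h : α j < 0
    · rw [if_pos ((lt_pred_iff k α hα hj.1 hj.2).mpr h)]
      exact core_neg _ _ h0 h1 h
    · push_neg at h
      rw [if_neg (fun hc => absurd ((lt_pred_iff k α hα hj.1 hj.2).mp hc) (not_lt.2 h))]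
      exact core_nonneg _ _ h0 h1 h
  linarith
end

section
/- The function f(a, b) = −log(1/(1 + e^a) − 1/(1 + e^b)) is convex on the domain {(a, b) ∈ ℝ² : a > b}. Equivalently, (a, b) ↦ e^a − e^b is log-concave on {a > b}, and consequently the logistic cumulative link surrogate ψ_CL(y, α) = −log(σ(α_y) − σ(α_{y−1})) with σ the sigmoid is convex in (α_{y−1}, α_y) on its domain α_{y−1} < α_y. -/
open Set

/-- The sigmoid function `σ(t) = 1/(1 + e^{−t})`. -/
noncomputable def sigmoid (t : ℝ) : ℝ := 1 / (1 + Real.exp (-t))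

lemma concave_log_exp_sub_one :
    ConcaveOn ℝ (Set.Ioi (0:ℝ)) (fun t => Real.log (Real.exp t - 1)) := by
  have hint : interior (Set.Ioi (0:ℝ)) = Set.Ioi 0 := interior_Ioi
  have hpos : ∀ t ∈ Set.Ioi (0:ℝ), (0:ℝ) < Real.exp t - 1 := by
    intro t ht
    have : (1:ℝ) < Real.exp t := by
      have := Real.exp_lt_exp.mpr ht
      simpa using this
    linarith
  have hderiv : ∀ t ∈ Set.Ioi (0:ℝ),
      HasDerivAt (fun u => Real.log (Real.exp u - 1)) (Real.exp t / (Real.exp t - 1)) t := by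
    intro t ht
    exact ((Real.hasDerivAt_exp t).sub_const 1).log (ne_of_gt (hpos t ht))
  have hderiveq : ∀ t ∈ Set.Ioi (0:ℝ),
      deriv (fun u => Real.log (Real.exp u - 1)) t = Real.exp t / (Real.exp t - 1) :=
    fun t ht => (hderiv t ht).deriv
  refine AntitoneOn.concaveOn_of_deriv (convex_Ioi 0) ?_ ?_ ?_
  · intro t ht
    exact ((hderiv t ht).continuousAt).continuousWithinAt
  · rw [hint]
    intro t ht
    exact ((hderiv t ht).differentiableAt).differentiableWithinAt
  · rw [hint]
    intro x hx y hy hxy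
    rw [hderiveq x hx, hderiveq y hy]
    have hx' := hpos x hx
    have hy' := hpos y hy
    rw [div_le_div_iff₀ hy' hx']
    have : Real.exp x ≤ Real.exp y := Real.exp_le_exp.mpr hxy
    nlinarith [Real.exp_pos x, Real.exp_pos y]

lemma convex_softplus : ConvexOn ℝ Set.univ (fun t => Real.log (1 + Real.exp t)) := by
  have hpos : ∀ t : ℝ, (0:ℝ) < 1 + Real.exp t := fun t => by positivity
  have hderiv : ∀ t : ℝ,
      HasDerivAt (fun u => Real.log (1 + Real.exp u)) (Real.exp t / (1 + Real.exp t)) t := by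
    intro t
    exact ((Real.hasDerivAt_exp t).const_add 1).log (ne_of_gt (hpos t))
  refine MonotoneOn.convexOn_of_deriv convex_univ ?_ ?_ ?_
  · intro t _
    exact ((hderiv t).continuousAt).continuousWithinAt
  · intro t _
    exact ((hderiv t).differentiableAt).differentiableWithinAt
  · intro x _ y _ hxy
    rw [(hderiv x).deriv, (hderiv y).deriv]
    rw [div_le_div_iff₀ (hpos x) (hpos y)]
    have : Real.exp x ≤ Real.exp y := Real.exp_le_exp.mpr hxy
    nlinarith [Real.exp_pos x, Real.exp_pos y]

noncomputable def Lsub : (ℝ × ℝ) →ᵃ[ℝ] ℝ :=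
  (LinearMap.fst ℝ ℝ ℝ - LinearMap.snd ℝ ℝ ℝ).toAffineMap

noncomputable def Lswap : (ℝ × ℝ) →ᵃ[ℝ] (ℝ × ℝ) :=
  ((LinearMap.snd ℝ ℝ ℝ).prod (LinearMap.fst ℝ ℝ ℝ)).toAffineMap

lemma hset1 : ⇑Lsub ⁻¹' Set.Ioi (0:ℝ) = {q : ℝ × ℝ | q.2 < q.1} := by
  ext q
  simp [Lsub, sub_pos]

lemma hconv1 : Convex ℝ {q : ℝ × ℝ | q.2 < q.1} :=
  hset1 ▸ (convex_Ioi (0:ℝ)).affine_preimage Lsub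

lemma part1 : ConcaveOn ℝ {q : ℝ × ℝ | q.2 < q.1}
    (fun q : ℝ × ℝ => Real.log (Real.exp q.1 - Real.exp q.2)) := by
  have hcomp := concave_log_exp_sub_one.comp_affineMap Lsub
  rw [hset1] at hcomp
  have hsnd : ConcaveOn ℝ {q : ℝ × ℝ | q.2 < q.1} (fun q : ℝ × ℝ => q.2) :=
    (LinearMap.snd ℝ ℝ ℝ).concaveOn hconv1
  have hsum := hcomp.add hsnd
  refine hsum.congr ?_
  intro q hq
  have hq' : q.2 < q.1 := hq
  have h1 : (0:ℝ) < Real.exp (q.1 - q.2) - 1 := by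
    have : (1:ℝ) < Real.exp (q.1 - q.2) := by
      rw [Real.one_lt_exp_iff]
      linarith
    linarith
  simp only [Function.comp, Lsub, Pi.add_apply]
  rw [show ((LinearMap.fst ℝ ℝ ℝ - LinearMap.snd ℝ ℝ ℝ).toAffineMap q) = q.1 - q.2 by simp]
  have key : Real.exp q.1 - Real.exp q.2 = (Real.exp (q.1 - q.2) - 1) * Real.exp q.2 := by
    rw [sub_mul, ← Real.exp_add]
    ring_nf
  rw [key, Real.log_mul (ne_of_gt h1) (Real.exp_ne_zero q.2), Real.log_exp]

/-- the map `(a, b) ↦ e^a − e^b` is log-concave on `{a > b}`, and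
consequently the logistic cumulative link surrogate
`(α_{y−1}, α_y) ↦ −log(σ(α_y) − σ(α_{y−1}))` is convex on its domain
`{α_{y−1} < α_y}`. -/
theorem stmt12 :
    ConcaveOn ℝ {q : ℝ × ℝ | q.2 < q.1}
      (fun q : ℝ × ℝ => Real.log (Real.exp q.1 - Real.exp q.2)) ∧
    ConvexOn ℝ {q : ℝ × ℝ | q.1 < q.2}
      (fun q : ℝ × ℝ => -Real.log (sigmoid q.2 - sigmoid q.1)) := by
  constructor
  · exact part1
  · have hneg : ConvexOn ℝ {q : ℝ × ℝ | q.2 < q.1}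
        (fun q : ℝ × ℝ => -Real.log (Real.exp q.1 - Real.exp q.2)) := part1.neg
    have hswap := hneg.comp_affineMap Lswap
    have hset : ⇑Lswap ⁻¹' {q : ℝ × ℝ | q.2 < q.1} = {q : ℝ × ℝ | q.1 < q.2} := by
      ext q; simp [Lswap]
    rw [hset] at hswap
    have hconv : Convex ℝ {q : ℝ × ℝ | q.1 < q.2} :=
      hset ▸ hconv1.affine_preimage Lswap
    have hsp1 : ConvexOn ℝ {q : ℝ × ℝ | q.1 < q.2}
        (fun q : ℝ × ℝ => Real.log (1 + Real.exp q.1)) := by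
      have := convex_softplus.comp_affineMap (LinearMap.fst ℝ ℝ ℝ).toAffineMap
      simpa [Function.comp_def] using this.subset (Set.subset_univ _) hconv
    have hsp2 : ConvexOn ℝ {q : ℝ × ℝ | q.1 < q.2}
        (fun q : ℝ × ℝ => Real.log (1 + Real.exp q.2)) := by
      have := convex_softplus.comp_affineMap (LinearMap.snd ℝ ℝ ℝ).toAffineMap
      simpa [Function.comp_def] using this.subset (Set.subset_univ _) hconv
    have hsum := (hswap.add hsp1).add hsp2
    refine hsum.congr ?_
    intro q hq
    have hq' : q.1 < q.2 := hq
    have ha : (0:ℝ) < 1 + Real.exp q.1 := by positivity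
    have hb : (0:ℝ) < 1 + Real.exp q.2 := by positivity
    have hd : (0:ℝ) < Real.exp q.2 - Real.exp q.1 := by
      have := Real.exp_lt_exp.mpr hq'
      linarith
    have hsig : sigmoid q.2 - sigmoid q.1
        = (Real.exp q.2 - Real.exp q.1) / ((1 + Real.exp q.1) * (1 + Real.exp q.2)) := by
      unfold sigmoid
      rw [Real.exp_neg, Real.exp_neg]
      have e1 := Real.exp_pos q.1
      have e2 := Real.exp_pos q.2
      field_simp
      ring
    simp only [Function.comp, Lswap, Pi.add_apply]
    rw [show (((LinearMap.snd ℝ ℝ ℝ).prod (LinearMap.fst ℝ ℝ ℝ)).toAffineMap q) = (q.2, q.1) by simp]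
    rw [hsig, Real.log_div (ne_of_gt hd) (by positivity),
      Real.log_mul (ne_of_gt ha) (ne_of_gt hb)]
    ring
end

section
/- Let Y be a random variable on {1,…,k} with distribution p ∈ Δ^k, and let α*_1 be any median of the random variable 3/2 − Y, with α*_i = i − 1 + α*_1 for i = 1,…,k−1. Then for every i, it is NOT the case that α*_i (2u_i(p) − 1) < 0; consequently, by the excess-risk identity, the vector α* achieves the minimal conditional absolute-error risk: L(α*, p) = L*(p). In other words, least absolute deviation is Fisher consistent with respect to the absolute error for any number of classes k. -/
open Finset

/-- Risk as a function of the predicted label. -/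
noncomputable def gRisk (k : ℕ) (p : ℕ → ℝ) (t : ℕ) : ℝ :=
  ∑ i ∈ Finset.Icc 1 k, p i * |(i : ℝ) - (t : ℝ)|

lemma sum_split (k t : ℕ) (p : ℕ → ℝ) (hp1 : ∑ i ∈ Finset.Icc 1 k, p i = 1)
    (ht : t ≤ k) : cum p t + ∑ i ∈ Finset.Icc (t + 1) k, p i = 1 := by
  have h1 : Finset.Icc 1 t = Finset.Ioc 0 t := Finset.Icc_add_one_left_eq_Ioc 0 t
  have h2 : Finset.Icc (t + 1) k = Finset.Ioc t k := Finset.Icc_add_one_left_eq_Ioc t k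
  have h3 : Finset.Icc 1 k = Finset.Ioc 0 k := Finset.Icc_add_one_left_eq_Ioc 0 k
  rw [cum, h1, h2, Finset.sum_Ioc_consecutive _ (Nat.zero_le t) ht, ← h3, hp1]

lemma gRisk_step (k t : ℕ) (p : ℕ → ℝ) (hp1 : ∑ i ∈ Finset.Icc 1 k, p i = 1)
    (h2 : t ≤ k - 1) (hk : 1 ≤ k) :
    gRisk k p (t + 1) = gRisk k p t + (2 * cum p t - 1) := by
  have htk : t ≤ k := by omega
  have key : ∀ i ∈ Finset.Icc 1 k,
      p i * |(i : ℝ) - ((t + 1 : ℕ) : ℝ)| =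
        p i * |(i : ℝ) - (t : ℝ)| + (if i ≤ t then p i else -(p i)) := by
    intro i hi
    rcases le_or_gt i t with h | h
    · have hir : (i : ℝ) ≤ (t : ℝ) := by exact_mod_cast h
      rw [if_pos h, abs_of_nonpos (by push_cast; linarith), abs_of_nonpos (by linarith)]
      push_cast; ring
    · have hir : (t : ℝ) + 1 ≤ (i : ℝ) := by exact_mod_cast h
      rw [if_neg (not_le.mpr h), abs_of_nonneg (by push_cast; linarith),
        abs_of_nonneg (by linarith)]
      push_cast; ring
  have hsum : gRisk k p (t + 1) =
      gRisk k p t + ∑ i ∈ Finset.Icc 1 k, (if i ≤ t then p i else -(p i)) := by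
    rw [gRisk, Finset.sum_congr rfl key, Finset.sum_add_distrib]; rfl
  have hf1 : (Finset.Icc 1 k).filter (fun i => i ≤ t) = Finset.Icc 1 t := by
    ext i; simp only [Finset.mem_filter, Finset.mem_Icc]; omega
  have hf2 : (Finset.Icc 1 k).filter (fun i => ¬ i ≤ t) = Finset.Icc (t + 1) k := by
    ext i; simp only [Finset.mem_filter, Finset.mem_Icc]; omega
  have hite : ∑ i ∈ Finset.Icc 1 k, (if i ≤ t then p i else -(p i)) =
      cum p t - ∑ i ∈ Finset.Icc (t + 1) k, p i := by
    rw [Finset.sum_ite, hf1, hf2, Finset.sum_neg_distrib, cum]; ring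
  have hsp := sum_split k t p hp1 htk
  rw [hsum, hite]; linarith

/-- consistency of least absolute deviation: let `Y ∼ p` on
`{1,…,k}`, let `m` be a median of `3/2 − Y`, and set `α_i = i − 1 + m`. Then
no coordinate of `α` disagrees in sign with `2u_i(p) − 1`, and `α` achieves the
minimal conditional absolute-error risk over `S`. -/
theorem stmt14 (k : ℕ) (hk : 2 ≤ k)
    (p : ℕ → ℝ) (hp0 : ∀ i, 0 ≤ p i) (hp1 : ∑ i ∈ Finset.Icc 1 k, p i = 1)
    (m : ℝ)
    (hmed1 : (1 : ℝ) / 2 ≤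
      ∑ i ∈ (Finset.Icc 1 k).filter (fun i : ℕ => 3 / 2 - (i : ℝ) ≤ m), p i)
    (hmed2 : (1 : ℝ) / 2 ≤
      ∑ i ∈ (Finset.Icc 1 k).filter (fun i : ℕ => m ≤ 3 / 2 - (i : ℝ)), p i)
    (α : ℕ → ℝ) (hα : ∀ i, α i = (i : ℝ) - 1 + m) :
    (∀ i ∈ Finset.Icc 1 (k - 1), ¬ (α i * (2 * cum p i - 1) < 0)) ∧
    condRisk k α p =
      sInf {y : ℝ | ∃ β : ℕ → ℝ, IncrVec k β ∧ y = condRisk k β p} := by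
  -- sign lemmas from the median conditions
  have B1 : ∀ t : ℕ, 1 ≤ t → t ≤ k - 1 → m < 1 - (t : ℝ) → cum p t ≤ 1 / 2 := by
    intro t h1 h2 hm
    have hsub : (Finset.Icc 1 k).filter (fun i : ℕ => 3 / 2 - (i : ℝ) ≤ m) ⊆
        Finset.Icc (t + 1) k := by
      intro i hi
      simp only [Finset.mem_filter, Finset.mem_Icc] at hi ⊢
      refine ⟨?_, hi.1.2⟩
      by_contra h; push_neg at h
      have : (i : ℝ) ≤ (t : ℝ) := by exact_mod_cast Nat.lt_succ_iff.mp h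
      linarith [hi.2]
    have hle := Finset.sum_le_sum_of_subset_of_nonneg hsub (fun i _ _ => hp0 i)
    have hsp := sum_split k t p hp1 (by omega)
    linarith
  have B2 : ∀ t : ℕ, 1 ≤ t → t ≤ k - 1 → 1 - (t : ℝ) ≤ m → 1 / 2 ≤ cum p t := by
    intro t h1 h2 hm
    have hsub : (Finset.Icc 1 k).filter (fun i : ℕ => m ≤ 3 / 2 - (i : ℝ)) ⊆
        Finset.Icc 1 t := by
      intro i hi
      simp only [Finset.mem_filter, Finset.mem_Icc] at hi ⊢
      refine ⟨hi.1.1, ?_⟩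
      have : (i : ℝ) < (t : ℝ) + 1 := by linarith [hi.2]
      exact_mod_cast Nat.lt_succ_iff.mp (by exact_mod_cast this)
    have hle := Finset.sum_le_sum_of_subset_of_nonneg hsub (fun i _ _ => hp0 i)
    rw [← cum] at hle
    linarith
  -- part 1
  have part1 : ∀ i ∈ Finset.Icc 1 (k - 1), ¬ (α i * (2 * cum p i - 1) < 0) := by
    intro i hi hneg
    simp only [Finset.mem_Icc] at hi
    rcases mul_neg_iff.mp hneg with ⟨ha, hb⟩ | ⟨ha, hb⟩
    · rw [hα] at ha
      have := B2 i hi.1 hi.2 (by linarith)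
      linarith
    · rw [hα] at ha
      have := B1 i hi.1 hi.2 (by linarith)
      linarith
  refine ⟨part1, ?_⟩
  -- bounds on pred
  have hcard : ∀ β : ℕ → ℝ, pred k β ≤ k := by
    intro β
    have h1 : ((Finset.Icc 1 (k - 1)).filter (fun i => β i < 0)).card ≤
        (Finset.Icc 1 (k - 1)).card :=
      Finset.card_le_card (Finset.filter_subset _ _)
    have h2 : (Finset.Icc 1 (k - 1)).card = k - 1 := by rw [Nat.card_Icc]; omega
    rw [pred]; omega
  have hpred1 : ∀ β : ℕ → ℝ, 1 ≤ pred k β := fun β => Nat.le_add_right 1 _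
  -- sign of α below/above pred
  have C1 : ∀ t : ℕ, 1 ≤ t → t ≤ k - 1 → t < pred k α → α t < 0 := by
    intro t h1 h2 hlt
    by_contra h; push_neg at h
    have hsub : (Finset.Icc 1 (k - 1)).filter (fun i => α i < 0) ⊆
        Finset.Icc 1 (t - 1) := by
      intro i hi
      simp only [Finset.mem_filter, Finset.mem_Icc] at hi ⊢
      refine ⟨hi.1.1, ?_⟩
      by_contra hit; push_neg at hit
      have hti : (t : ℝ) ≤ (i : ℝ) := by exact_mod_cast (by omega : t ≤ i)
      have := hi.2
      rw [hα] at this h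
      linarith
    have := Finset.card_le_card hsub
    rw [Nat.card_Icc] at this
    rw [pred] at hlt
    omega
  have C2 : ∀ t : ℕ, 1 ≤ t → t ≤ k - 1 → pred k α ≤ t → 0 ≤ α t := by
    intro t h1 h2 hle
    by_contra h; push_neg at h
    have hsub : Finset.Icc 1 t ⊆
        (Finset.Icc 1 (k - 1)).filter (fun i => α i < 0) := by
      intro i hi
      simp only [Finset.mem_filter, Finset.mem_Icc] at hi ⊢
      refine ⟨⟨hi.1, by omega⟩, ?_⟩
      have hti : (i : ℝ) ≤ (t : ℝ) := by exact_mod_cast hi.2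
      rw [hα] at h ⊢
      linarith
    have := Finset.card_le_card hsub
    rw [Nat.card_Icc] at this
    rw [pred] at hle
    omega
  -- minimality of gRisk at pred k α
  have down : ∀ d t : ℕ, 1 ≤ t → t + d = pred k α →
      gRisk k p (pred k α) ≤ gRisk k p t := by
    intro d
    induction d with
    | zero => intro t h1 h2; simp only [Nat.add_zero] at h2; rw [h2]
    | succ n ih =>
      intro t h1 h2
      have hlt : t < pred k α := by omega
      have htk : t ≤ k - 1 := by have := hcard α; omega
      have hneg := C1 t h1 htk hlt
      rw [hα] at hneg
      have hcum := B1 t h1 htk (by linarith)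
      have hstep := gRisk_step k t p hp1 htk (by omega)
      have hih := ih (t + 1) (by omega) (by omega)
      linarith
  have up : ∀ d t : ℕ, t = pred k α + d → t ≤ k →
      gRisk k p (pred k α) ≤ gRisk k p t := by
    intro d
    induction d with
    | zero => intro t h1 h2; simp only [Nat.add_zero] at h1; rw [h1]
    | succ n ih =>
      intro t h1 h2
      have hs1 : 1 ≤ pred k α + n := by have := hpred1 α; omega
      have hsk : pred k α + n ≤ k - 1 := by omega
      have hpos := C2 (pred k α + n) hs1 hsk (by omega)
      rw [hα] at hpos
      have hcast : ((pred k α + n : ℕ) : ℝ) = (pred k α : ℝ) + n := by push_cast; ring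
      have hcum := B2 (pred k α + n) hs1 hsk (by rw [hcast] at hpos ⊢; linarith)
      have hstep := gRisk_step k (pred k α + n) p hp1 hsk (by omega)
      have hih := ih (pred k α + n) rfl (by omega)
      have ht : t = pred k α + n + 1 := by omega
      rw [ht]
      linarith
  have gmin : ∀ t : ℕ, 1 ≤ t → t ≤ k → gRisk k p (pred k α) ≤ gRisk k p t := by
    intro t h1 h2
    rcases le_total t (pred k α) with h | h
    · exact down (pred k α - t) t h1 (by omega)
    · exact up (t - pred k α) t (by omega) h2
  -- conclude
  have hincr : IncrVec k α := by
    intro i h1 h2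
    rw [hα, hα]
    push_cast
    linarith
  have hmem : condRisk k α p ∈
      {y : ℝ | ∃ β : ℕ → ℝ, IncrVec k β ∧ y = condRisk k β p} :=
    ⟨α, hincr, rfl⟩
  have hlb : ∀ y ∈ {y : ℝ | ∃ β : ℕ → ℝ, IncrVec k β ∧ y = condRisk k β p},
      condRisk k α p ≤ y := by
    rintro y ⟨β, hβ, rfl⟩
    have e1 : condRisk k α p = gRisk k p (pred k α) := rfl
    have e2 : condRisk k β p = gRisk k p (pred k β) := rfl
    rw [e1, e2]
    exact gmin (pred k β) (hpred1 β) (hcard β)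
  exact le_antisymm (le_csInf ⟨_, hmem⟩ hlb) (csInf_le ⟨_, hlb⟩ hmem)
end

section
/- In the setting of an admissible loss ℓ(y, α) = g(|y − pred(α)|), let r = pred(α) for α ∈ S and let r* be the prediction of a minimizer of L(·, p) over S. Then L(α, p) − L*(p) = Σ_{i=r}^{r*−1} (v_i(p) − u_i(p)) if r < r*, and L(α, p) − L*(p) = Σ_{i=r*}^{r−1} (u_i(p) − v_i(p)) if r > r*. -/
open Finset

/-- Conditional risk for the admissible loss `ℓ(y, α) = g(|y − pred(α)|)`. -/
noncomputable def gCondRisk (k : ℕ) (g : ℕ → ℝ) (α : ℕ → ℝ) (p : ℕ → ℝ) : ℝ :=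
  ∑ i ∈ Finset.Icc 1 k, p i * g (((pred k α : ℤ) - (i : ℤ)).natAbs)

/-- Increments `c_i = g(i) − g(i−1)`. -/
noncomputable def incr (g : ℕ → ℝ) (i : ℕ) : ℝ := g i - g (i - 1)

/-- `u_i(p) = Σ_{j=1}^i p_j c_{i−j+1}`. -/
noncomputable def uGen (g : ℕ → ℝ) (p : ℕ → ℝ) (i : ℕ) : ℝ :=
  ∑ j ∈ Finset.Icc 1 i, p j * incr g (i - j + 1)

/-- `v_i(p) = Σ_{j=i+1}^k p_j c_{j−i}`. -/
noncomputable def vGen (k : ℕ) (g : ℕ → ℝ) (p : ℕ → ℝ) (i : ℕ) : ℝ :=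
  ∑ j ∈ Finset.Icc (i + 1) k, p j * incr g (j - i)


/-- Risk as a function of the prediction only. -/
noncomputable def Lr (k : ℕ) (g : ℕ → ℝ) (p : ℕ → ℝ) (r : ℕ) : ℝ :=
  ∑ i ∈ Finset.Icc 1 k, p i * g (((r : ℤ) - (i : ℤ)).natAbs)

lemma stepLr (k : ℕ) (g p : ℕ → ℝ) (r : ℕ) (hr1 : 1 ≤ r) (hrk : r ≤ k) :
    Lr k g p (r + 1) - Lr k g p r = uGen g p r - vGen k g p r := by
  have hsplit : ∀ f : ℕ → ℝ, (∑ i ∈ Finset.Icc 1 k, f i) =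
      (∑ i ∈ Finset.Icc 1 r, f i) + ∑ i ∈ Finset.Icc (r + 1) k, f i := by
    intro f
    rw [show (1:ℕ) = 0 + 1 from rfl, Finset.Icc_add_one_left_eq_Ioc, Finset.Icc_add_one_left_eq_Ioc, zero_add, Finset.Icc_add_one_left_eq_Ioc]
    exact (Finset.sum_Ioc_consecutive f (Nat.zero_le r) hrk).symm
  unfold Lr uGen vGen incr
  rw [hsplit, hsplit]
  have h1 : (∑ i ∈ Finset.Icc 1 r, p i * g ((((r:ℕ)+1 : ℤ) - i).natAbs)) -
      ∑ i ∈ Finset.Icc 1 r, p i * g (((r:ℤ) - i).natAbs) =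
      ∑ j ∈ Finset.Icc 1 r, p j * (g (r - j + 1) - g (r - j + 1 - 1)) := by
    rw [← Finset.sum_sub_distrib]
    apply Finset.sum_congr rfl
    intro j hj
    simp only [Finset.mem_Icc] at hj
    have e1 : (((r:ℕ)+1 : ℤ) - j).natAbs = r - j + 1 := by omega
    have e2 : ((r:ℤ) - j).natAbs = r - j := by omega
    have e3 : r - j + 1 - 1 = r - j := by omega
    rw [e1, e2, e3]; ring
  have h2 : (∑ i ∈ Finset.Icc (r+1) k, p i * g ((((r:ℕ)+1 : ℤ) - i).natAbs)) -
      ∑ i ∈ Finset.Icc (r+1) k, p i * g (((r:ℤ) - i).natAbs) =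
      -∑ j ∈ Finset.Icc (r+1) k, p j * (g (j - r) - g (j - r - 1)) := by
    rw [← Finset.sum_sub_distrib, ← Finset.sum_neg_distrib]
    apply Finset.sum_congr rfl
    intro j hj
    simp only [Finset.mem_Icc] at hj
    have e1 : (((r:ℕ)+1 : ℤ) - j).natAbs = j - r - 1 := by omega
    have e2 : ((r:ℤ) - j).natAbs = j - r := by omega
    rw [e1, e2]; ring
  push_cast at h1 h2 ⊢
  linarith [h1, h2]

lemma teleLr (k : ℕ) (g p : ℕ → ℝ) (a : ℕ) (ha : 1 ≤ a) :
    ∀ b, a ≤ b → b ≤ k →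
    Lr k g p b - Lr k g p a = ∑ i ∈ Finset.Ico a b, (uGen g p i - vGen k g p i) := by
  intro b hab
  induction b, hab using Nat.le_induction with
  | base => intro _; simp
  | succ b hb ih =>
    intro hbk
    rw [Finset.sum_Ico_succ_top hb, ← ih (by omega)]
    have := stepLr k g p b (by omega) (by omega)
    linarith

lemma predBounds (k : ℕ) (hk : 1 ≤ k) (α : ℕ → ℝ) : 1 ≤ pred k α ∧ pred k α ≤ k := by
  constructor
  · exact Nat.le_add_right 1 _
  · unfold pred
    have h1 : ((Finset.Icc 1 (k-1)).filter (fun i => α i < 0)).card ≤ (Finset.Icc 1 (k-1)).card :=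
      Finset.card_filter_le _ _
    rw [Nat.card_Icc] at h1
    omega

/-- for an admissible loss `ℓ(y, α) = g(|y − pred(α)|)`, if
`αstar ∈ S` minimizes the conditional risk over `S` with `r* = pred(αstar)`,
then for `α ∈ S` with `r = pred(α)`:
`L(α, p) − L*(p) = Σ_{i=r}^{r*−1} (v_i − u_i)` when `r < r*`, and
`L(α, p) − L*(p) = Σ_{i=r*}^{r−1} (u_i − v_i)` when `r > r*`. -/
theorem stmt16 (k : ℕ) (hk : 2 ≤ k)
    (g : ℕ → ℝ) (hg0 : g 0 = 0) (hg : Monotone g)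
    (p : ℕ → ℝ) (hp0 : ∀ i, 0 ≤ p i) (hp1 : ∑ i ∈ Finset.Icc 1 k, p i = 1)
    (αstar : ℕ → ℝ) (hstar : IncrVec k αstar)
    (hopt : ∀ β : ℕ → ℝ, IncrVec k β → gCondRisk k g αstar p ≤ gCondRisk k g β p)
    (α : ℕ → ℝ) (hα : IncrVec k α) :
    (pred k α < pred k αstar →
      gCondRisk k g α p - gCondRisk k g αstar p =
        ∑ i ∈ Finset.Icc (pred k α) (pred k αstar - 1), (vGen k g p i - uGen g p i)) ∧
    (pred k αstar < pred k α →
      gCondRisk k g α p - gCondRisk k g αstar p =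
        ∑ i ∈ Finset.Icc (pred k αstar) (pred k α - 1), (uGen g p i - vGen k g p i)) := by
  have h1 : 1 ≤ k := by omega
  obtain ⟨hr1, hrk⟩ := predBounds k h1 α
  obtain ⟨hs1, hsk⟩ := predBounds k h1 αstar
  have hLa : gCondRisk k g α p = Lr k g p (pred k α) := rfl
  have hLs : gCondRisk k g αstar p = Lr k g p (pred k αstar) := rfl
  constructor
  · intro hlt
    have := teleLr k g p (pred k α) hr1 (pred k αstar) (le_of_lt hlt) hsk
    have hIcc : Finset.Icc (pred k α) (pred k αstar - 1) = Finset.Ico (pred k α) (pred k αstar) := by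
      rw [← Finset.Ico_add_one_right_eq_Icc]; congr 1; omega
    rw [hLa, hLs, hIcc]
    rw [Finset.sum_congr rfl (fun i _ => by ring : ∀ i ∈ Finset.Ico (pred k α) (pred k αstar),
      vGen k g p i - uGen g p i = -(uGen g p i - vGen k g p i)), Finset.sum_neg_distrib]
    linarith
  · intro hlt
    have := teleLr k g p (pred k αstar) hs1 (pred k α) (le_of_lt hlt) hrk
    have hIcc : Finset.Icc (pred k αstar) (pred k α - 1) = Finset.Ico (pred k αstar) (pred k α) := by
      rw [← Finset.Ico_add_one_right_eq_Icc]; congr 1; omega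
    rw [hLa, hLs, hIcc]
    linarith
end

section
/- Let σ(t) = 1/(1 + e^{−t}) be the sigmoid. If the odds-ratio R_i(x) = [u_i(η(x))/(1 − u_i(η(x)))] · [(1 − u_{i+1}(η(x)))/u_{i+1}(η(x))] is independent of x for every 1 ≤ i ≤ k−2, then the pointwise surrogate-optimal decision function α*_i(x) = log(u_i(η(x))/(1 − u_i(η(x)))) is threshold-based: there exist constants θ_1 ≤ … ≤ θ_{k−1} and a function g such that α*_i(x) = θ_i − g(x) for all i and x. -/
open Finset

/-- if the odds-ratio
`R_i(x) = [u_i(x)/(1 − u_i(x))]·[(1 − u_{i+1}(x))/u_{i+1}(x)]` is independent of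
`x` for each `1 ≤ i ≤ k−2`, then the pointwise surrogate-optimal decision
function `α*_i(x) = log(u_i(x)/(1 − u_i(x)))` is threshold-based: there are
constants `θ_1 ≤ … ≤ θ_{k−1}` and a function `g` with `α*_i(x) = θ_i − g(x)`. -/
theorem stmt18 (k : ℕ) (hk : 2 ≤ k) (X : Type*) (η : X → ℕ → ℝ)
    (u : X → ℕ → ℝ) (hu : ∀ x i, u x i = ∑ j ∈ Finset.Icc 1 i, η x j)
    (hu01 : ∀ x, ∀ i ∈ Finset.Icc 1 (k - 1), u x i ∈ Set.Ioo (0 : ℝ) 1)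
    (huinc : ∀ x, ∀ i ∈ Finset.Icc 1 (k - 2), u x i < u x (i + 1))
    (hR : ∀ i ∈ Finset.Icc 1 (k - 2), ∀ x₁ x₂ : X,
      (u x₁ i / (1 - u x₁ i)) * ((1 - u x₁ (i + 1)) / u x₁ (i + 1)) =
        (u x₂ i / (1 - u x₂ i)) * ((1 - u x₂ (i + 1)) / u x₂ (i + 1))) :
    ∃ (θ : ℕ → ℝ) (g : X → ℝ),
      (∀ i ∈ Finset.Icc 1 (k - 2), θ i ≤ θ (i + 1)) ∧
      ∀ x : X, ∀ i ∈ Finset.Icc 1 (k - 1),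
        Real.log (u x i / (1 - u x i)) = θ i - g x := by
  by_cases hX : Nonempty X
  · obtain ⟨x₀⟩ := hX
    set α : X → ℕ → ℝ := fun x i => Real.log (u x i / (1 - u x i)) with hα
    -- facts about membership
    have hmem : ∀ i ∈ Finset.Icc 1 (k - 2), i ∈ Finset.Icc 1 (k - 1) ∧
        i + 1 ∈ Finset.Icc 1 (k - 1) := by
      intro i hi
      simp only [Finset.mem_Icc] at hi ⊢
      omega
    -- the difference α i - α (i+1) is independent of x
    have hdiff : ∀ i ∈ Finset.Icc 1 (k - 2), ∀ x₁ x₂ : X,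
        α x₁ i - α x₁ (i + 1) = α x₂ i - α x₂ (i + 1) := by
      intro i hi x₁ x₂
      obtain ⟨hi1, hi2⟩ := hmem i hi
      have key : ∀ x : X,
          Real.log ((u x i / (1 - u x i)) * ((1 - u x (i + 1)) / u x (i + 1)))
            = α x i - α x (i + 1) := by
        intro x
        obtain ⟨ha0, ha1⟩ := hu01 x i hi1
        obtain ⟨hb0, hb1⟩ := hu01 x (i + 1) hi2
        have h1 : (0:ℝ) < u x i / (1 - u x i) := div_pos ha0 (by linarith)
        have h2 : (0:ℝ) < (1 - u x (i + 1)) / u x (i + 1) := by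
          apply div_pos <;> linarith
        rw [Real.log_mul (ne_of_gt h1) (ne_of_gt h2)]
        have h3 : Real.log ((1 - u x (i + 1)) / u x (i + 1))
            = - Real.log (u x (i + 1) / (1 - u x (i + 1))) := by
          rw [← Real.log_inv]
          congr 1
          field_simp
        rw [h3]
        ring
      have := hR i hi x₁ x₂
      calc α x₁ i - α x₁ (i + 1) = _ := (key x₁).symm
        _ = _ := by rw [this]
        _ = α x₂ i - α x₂ (i + 1) := key x₂
    -- telescoping: α x i - α x 1 is independent of x
    have htel : ∀ i, 1 ≤ i → i ≤ k - 1 → ∀ x : X,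
        α x i - α x 1 = α x₀ i - α x₀ 1 := by
      intro i hi1
      induction i, hi1 using Nat.le_induction with
      | base => intro _ x; simp
      | succ n hn ih =>
        intro hle x
        have hn2 : n ∈ Finset.Icc 1 (k - 2) := by
          simp only [Finset.mem_Icc]; omega
        have hnle : n ≤ k - 1 := by omega
        have h1 := hdiff n hn2 x x₀
        have h2 := ih hnle x
        linarith
    refine ⟨fun i => α x₀ i, fun x => α x₀ 1 - α x 1, ?_, ?_⟩
    · intro i hi
      obtain ⟨hi1, hi2⟩ := hmem i hi
      obtain ⟨ha0, ha1⟩ := hu01 x₀ i hi1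
      obtain ⟨hb0, hb1⟩ := hu01 x₀ (i + 1) hi2
      have hlt := huinc x₀ i hi
      apply Real.log_le_log (div_pos ha0 (by linarith))
      rw [div_le_div_iff₀ (by linarith) (by linarith)]
      nlinarith
    · intro x i hi
      simp only [Finset.mem_Icc] at hi
      have := htel i hi.1 hi.2 x
      simp only [hα] at this ⊢
      linarith
  · exact ⟨fun _ => 0, fun x => absurd ⟨x⟩ hX, fun i hi => le_refl _,
      fun x => absurd ⟨x⟩ hX⟩
end
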